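/- (Theorem 1.) Let T be a finite nonempty type of tasks, P a probability measure on T, T₁ : T a task with P({T₁}) = p₁ where 0 < p₁ < 1, and β ∈ [0,1). If K is a natural number with (K : ℝ) > log_{1-p₁}((1-β)/p₁), then under the (K+1)-fold product measure P^{K+1} on (Fin (K+1) → T) (coordinate 0 the realized task, coordinates 1,…,K the samples), the probability of the event that the realized task is T₁ and no sample equals T₁, i.e., of {ω | ω 0 = T₁ ∧ ∀ i ≠ 0, ω i ≠ T₁}, is strictly less than 1-β. -/
import Mathlib


open MeasureTheory

/-- Theorem 1: if the sample size `K` satisfies `K > log_{1-p₁}((1-β)/p₁)`, then the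
probability that the realized task is the least likely task `T₁` while none of the
`K` i.i.d. samples equals `T₁` is strictly less than the allowed risk `1-β`. -/
theorem sample_size_prob_lt_risk {T : Type*} [Fintype T] [Nonempty T]
    [MeasurableSpace T] [MeasurableSingletonClass T]
    (P : Measure T) [IsProbabilityMeasure P] (T₁ : T) (p₁ : ℝ)
    (hp₁ : (P {T₁}).toReal = p₁) (hp₁0 : 0 < p₁) (hp₁1 : p₁ < 1)
    (β : ℝ) (hβ0 : 0 ≤ β) (hβ1 : β < 1) (K : ℕ)
    (hK : (K : ℝ) > Real.logb (1 - p₁) ((1 - β) / p₁)) :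
    ((Measure.pi fun _ : Fin (K + 1) => P)
        {ω | ω 0 = T₁ ∧ ∀ i ≠ 0, ω i ≠ T₁}).toReal < 1 - β := by
  set s : Fin (K + 1) → Set T := fun i => if i = 0 then {T₁} else {T₁}ᶜ with hs
  have hset : {ω : Fin (K + 1) → T | ω 0 = T₁ ∧ ∀ i ≠ 0, ω i ≠ T₁}
      = Set.pi Set.univ s := by
    ext ω
    simp only [Set.mem_setOf_eq, Set.mem_pi, Set.mem_univ, true_implies, hs]
    constructor
    · rintro ⟨h0, h⟩ i
      by_cases hi : i = 0
      · simp [hi, h0]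
      · simp [hi, h i hi]
    · intro h
      refine ⟨by simpa using h 0, fun i hi => by simpa [hi] using h i⟩
  rw [hset, Measure.pi_pi]
  have hcompl : P {T₁}ᶜ = ENNReal.ofReal (1 - p₁) := by
    rw [prob_compl_eq_one_sub (measurableSet_singleton T₁)]
    rw [← hp₁, ENNReal.ofReal_sub _ (ENNReal.toReal_nonneg),
      ENNReal.ofReal_one, ENNReal.ofReal_toReal (measure_ne_top P _)]
  have hprod : ∏ i, P (s i) = P {T₁} * (ENNReal.ofReal (1 - p₁)) ^ K := by
    rw [Fin.prod_univ_succ]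
    simp [hs, Fin.succ_ne_zero, hcompl]
  rw [hprod, ENNReal.toReal_mul, ENNReal.toReal_pow, hp₁,
    ENNReal.toReal_ofReal (by linarith)]
  -- now real inequality: p₁ * (1 - p₁)^K < 1 - β
  have hb0 : (0:ℝ) < 1 - p₁ := by linarith
  have hb1 : (1:ℝ) - p₁ < 1 := by linarith
  have hx : (0:ℝ) < (1 - β) / p₁ := div_pos (by linarith) hp₁0
  have hlogb : Real.log (1 - p₁) < 0 := Real.log_neg hb0 hb1
  have h1 : (K : ℝ) * Real.log (1 - p₁) < Real.log ((1 - β) / p₁) := by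
    rw [Real.logb, gt_iff_lt, div_lt_iff_of_neg hlogb] at hK
    linarith [hK]
  have h2 : (1 - p₁) ^ K < (1 - β) / p₁ := by
    have := Real.exp_lt_exp.mpr h1
    rwa [Real.exp_log hx, ← Real.log_pow, Real.exp_log (pow_pos hb0 K)] at this
  calc p₁ * (1 - p₁) ^ K < p₁ * ((1 - β) / p₁) := by
        exact (mul_lt_mul_iff_right₀ hp₁0).mpr h2
    _ = 1 - β := by field_simp
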